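/- Let G_0 be a connected simple graph with at least three vertices and let u, v be two distinct vertices of G_0. For nonnegative integers s, t, let G_{s,t} denote the graph obtained from G_0 by attaching s new pendant vertices to u and t new pendant vertices to v. If s ≥ 1 and t ≥ 1, then D'(G_{s,t}) > min{ D'(G_{s+t,0}), D'(G_{0,s+t}) }. -/
import Mathlib


open scoped Classical
open Finset

/-- The transmission of a vertex: sum of distances to all other vertices. -/
noncomputable def transmission {V : Type*} [Fintype V] (G : SimpleGraph V) (u : V) : ℕ :=
  ∑ v : V, G.dist u v

/-- The degree distance `D'(G) = ∑_u deg(u) · D_G(u)`. -/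
noncomputable def degDist {V : Type*} [Fintype V] (G : SimpleGraph V) : ℕ :=
  ∑ u : V, G.degree u * transmission G u

/-- The diameter of a graph: the largest distance between two vertices. -/
noncomputable def gdiam {V : Type*} [Fintype V] (G : SimpleGraph V) : ℕ :=
  Finset.univ.sup fun p : V × V => G.dist p.1 p.2

/-- The reverse degree distance `rD'(G) = 2(n-1)·m·d - D'(G)`. -/
noncomputable def revDegDist {V : Type*} [Fintype V] (G : SimpleGraph V) : ℤ :=
  2 * ((Fintype.card V : ℤ) - 1) * (G.edgeFinset.card : ℤ) * (gdiam G : ℤ) - (degDist G : ℤ)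

/-- A unicyclic graph: connected with exactly one cycle, equivalently connected with
`#edges = #vertices`. -/
def IsUnicyclic {V : Type*} [Fintype V] (G : SimpleGraph V) : Prop :=
  G.Connected ∧ G.edgeFinset.card = Fintype.card V

/-- Number of pendant vertices (vertices of degree one). -/
noncomputable def pendantCount {V : Type*} [Fintype V] (G : SimpleGraph V) : ℕ :=
  (Finset.univ.filter fun v => G.degree v = 1).card

/-- The unicyclic graph `U^k_{n,m,d}(a,b)` on vertex set `Fin n`: the cycle
`C_m = v_0 v_1 … v_{m-1} v_0` (vertices `0,…,m-1`), a path on `a` vertices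
(`m,…,m+a-1`) attached to `v_0`, a path on `b` vertices (`m+a,…,m+a+b-1`)
attached to `v_{⌊m/2⌋}`, and the remaining `n-m-a-b` vertices are pendant
vertices attached to `v_k`. -/
def UGraph (n m a b k : ℕ) : SimpleGraph (Fin n) :=
  SimpleGraph.fromRel fun x y =>
    (x.val + 1 < m ∧ y.val = x.val + 1) ∨
    (x.val = m - 1 ∧ y.val = 0) ∨
    (1 ≤ a ∧ x.val = 0 ∧ y.val = m) ∨
    (m ≤ x.val ∧ x.val + 1 < m + a ∧ y.val = x.val + 1) ∨
    (1 ≤ b ∧ x.val = m / 2 ∧ y.val = m + a) ∨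
    (m + a ≤ x.val ∧ x.val + 1 < m + a + b ∧ y.val = x.val + 1) ∨
    (x.val = k ∧ m + a + b ≤ y.val)

/-- Membership in `𝕌(n,m,d)`: unicyclic with `n` vertices, girth `m`, diameter `d`. -/
def memUU (n m d : ℕ) (G : SimpleGraph (Fin n)) : Prop :=
  IsUnicyclic G ∧ G.girth = (m : ℕ∞) ∧ gdiam G = d


/-- The graph `G_{s,t}` obtained from `G₀` by attaching `s` new pendant vertices to `u`
and `t` new pendant vertices to `v`. -/
def attach2 {V : Type*} (G : SimpleGraph V) (u v : V) (s t : ℕ) :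
    SimpleGraph (V ⊕ (Fin s ⊕ Fin t)) :=
  SimpleGraph.fromRel fun x y =>
    (∃ a b, x = Sum.inl a ∧ y = Sum.inl b ∧ G.Adj a b) ∨
    (∃ i, x = Sum.inl u ∧ y = Sum.inr (Sum.inl i)) ∨
    (∃ j, x = Sum.inl v ∧ y = Sum.inr (Sum.inr j))
section Attach2Lemmas

open Sum

variable {V : Type*} {G : SimpleGraph V} {u v : V} {s t : ℕ}

@[simp] lemma adj_inl_inl {a b : V} :
    (attach2 G u v s t).Adj (Sum.inl a) (Sum.inl b) ↔ G.Adj a b := by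
  constructor
  · rintro ⟨hne, h | h⟩ <;> rcases h with ⟨a', b', ha, hb, hab⟩ | ⟨i, ha, hb⟩ | ⟨j, ha, hb⟩ <;>
      simp_all
    · exact hab.symm
  · intro h
    exact ⟨by simpa using h.ne, Or.inl (Or.inl ⟨a, b, rfl, rfl, h⟩)⟩

@[simp] lemma adj_inl_inrl {a : V} {i : Fin s} :
    (attach2 G u v s t).Adj (Sum.inl a) (Sum.inr (Sum.inl i)) ↔ a = u := by
  constructor
  · rintro ⟨hne, h | h⟩ <;> rcases h with ⟨a', b', ha, hb, hab⟩ | ⟨i', ha, hb⟩ | ⟨j, ha, hb⟩ <;>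
      simp_all
  · rintro rfl
    exact ⟨by simp, Or.inl (Or.inr (Or.inl ⟨i, rfl, rfl⟩))⟩

@[simp] lemma adj_inl_inrr {a : V} {j : Fin t} :
    (attach2 G u v s t).Adj (Sum.inl a) (Sum.inr (Sum.inr j)) ↔ a = v := by
  constructor
  · rintro ⟨hne, h | h⟩ <;> rcases h with ⟨a', b', ha, hb, hab⟩ | ⟨i', ha, hb⟩ | ⟨j', ha, hb⟩ <;>
      simp_all
  · rintro rfl
    exact ⟨by simp, Or.inl (Or.inr (Or.inr ⟨j, rfl, rfl⟩))⟩

@[simp] lemma adj_inr_inr {x y : Fin s ⊕ Fin t} :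
    ¬ (attach2 G u v s t).Adj (Sum.inr x) (Sum.inr y) := by
  rintro ⟨hne, h | h⟩ <;> rcases h with ⟨a', b', ha, hb, hab⟩ | ⟨i', ha, hb⟩ | ⟨j', ha, hb⟩ <;>
    simp_all

@[simp] lemma adj_inrl_inl {a : V} {i : Fin s} :
    (attach2 G u v s t).Adj (Sum.inr (Sum.inl i)) (Sum.inl a) ↔ a = u := by
  rw [SimpleGraph.adj_comm]; exact adj_inl_inrl

@[simp] lemma adj_inrr_inl {a : V} {j : Fin t} :
    (attach2 G u v s t).Adj (Sum.inr (Sum.inr j)) (Sum.inl a) ↔ a = v := by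
  rw [SimpleGraph.adj_comm]; exact adj_inl_inrr

/-- The inclusion as a graph homomorphism. -/
def iota (G : SimpleGraph V) (u v : V) (s t : ℕ) : G →g attach2 G u v s t :=
  ⟨Sum.inl, fun h => adj_inl_inl.2 h⟩

lemma reachable_inl {a b : V} (h : G.Reachable a b) :
    (attach2 G u v s t).Reachable (Sum.inl a) (Sum.inl b) :=
  h.map (iota G u v s t)

lemma attach2_connected (hconn : G.Connected) : (attach2 G u v s t).Connected := by
  have hne : Nonempty (V ⊕ (Fin s ⊕ Fin t)) := ⟨Sum.inl u⟩
  rw [SimpleGraph.connected_iff]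
  refine ⟨fun x y => ?_, hne⟩
  have key : ∀ z : V ⊕ (Fin s ⊕ Fin t), (attach2 G u v s t).Reachable z (Sum.inl u) := by
    rintro (a | i | j)
    · exact reachable_inl (hconn a u)
    · exact (SimpleGraph.Adj.reachable (by simp))
    · exact (SimpleGraph.Adj.reachable (by simp : (attach2 G u v s t).Adj _ (Sum.inl v))).trans
        (reachable_inl (hconn v u))
  exact (key x).trans (key y).symm

/-- Projection back to `V`. -/
def rho (u v : V) : V ⊕ (Fin s ⊕ Fin t) → V :=
  Sum.elim id (Sum.elim (fun _ => u) fun _ => v)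

lemma rho_adj {x y : V ⊕ (Fin s ⊕ Fin t)} (h : (attach2 G u v s t).Adj x y) :
    rho u v x = rho u v y ∨ G.Adj (rho u v x) (rho u v y) := by
  rcases x with a | i | j <;> rcases y with b | i' | j' <;> simp_all [rho]

lemma dist_rho_le (hconn : G.Connected) {x y : V ⊕ (Fin s ⊕ Fin t)}
    (w : (attach2 G u v s t).Walk x y) :
    G.dist (rho u v x) (rho u v y) ≤ w.length := by
  induction w with
  | nil => simp
  | @cons x y z h p ih =>
    rcases rho_adj h with he | ha
    · rw [SimpleGraph.Walk.length_cons, he]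
      exact ih.trans (Nat.le_succ _)
    · calc G.dist (rho u v x) (rho u v z)
          ≤ G.dist (rho u v x) (rho u v y) + G.dist (rho u v y) (rho u v z) :=
            hconn.dist_triangle
        _ ≤ 1 + p.length := by
            have h1 := SimpleGraph.dist_le ha.toWalk
            simp only [SimpleGraph.Adj.toWalk, SimpleGraph.Walk.length_cons,
              SimpleGraph.Walk.length_nil] at h1
            omega
        _ = (SimpleGraph.Walk.cons h p).length := by
            simp [SimpleGraph.Walk.length_cons]; omega

lemma dist_inl_inl (hconn : G.Connected) (a b : V) :
    (attach2 G u v s t).dist (Sum.inl a) (Sum.inl b) = G.dist a b := by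
  apply le_antisymm
  · obtain ⟨w, hw⟩ := (hconn a b).exists_walk_length_eq_dist
    calc (attach2 G u v s t).dist (Sum.inl a) (Sum.inl b)
        ≤ (w.map (iota G u v s t)).length := SimpleGraph.dist_le _
      _ = G.dist a b := by rw [SimpleGraph.Walk.length_map, hw]
  · obtain ⟨w, hw⟩ :=
      ((attach2_connected hconn) (Sum.inl a) (Sum.inl b)).exists_walk_length_eq_dist
    have := dist_rho_le (u := u) (v := v) hconn w
    simpa [rho, hw] using this

lemma dist_inrl (hconn : G.Connected) {x : V ⊕ (Fin s ⊕ Fin t)} (i : Fin s)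
    (hx : x ≠ Sum.inr (Sum.inl i)) :
    (attach2 G u v s t).dist x (Sum.inr (Sum.inl i)) =
      (attach2 G u v s t).dist x (Sum.inl u) + 1 := by
  have hc := attach2_connected (u := u) (v := v) (s := s) (t := t) hconn
  apply le_antisymm
  · calc (attach2 G u v s t).dist x (Sum.inr (Sum.inl i))
        ≤ (attach2 G u v s t).dist x (Sum.inl u) +
          (attach2 G u v s t).dist (Sum.inl u) (Sum.inr (Sum.inl i)) := hc.dist_triangle
      _ ≤ (attach2 G u v s t).dist x (Sum.inl u) + 1 := by
          have hadj : (attach2 G u v s t).Adj (Sum.inl u) (Sum.inr (Sum.inl i)) :=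
            adj_inl_inrl.2 rfl
          have h1 := SimpleGraph.dist_le hadj.toWalk
          simp only [SimpleGraph.Adj.toWalk, SimpleGraph.Walk.length_cons,
            SimpleGraph.Walk.length_nil] at h1
          omega
  · obtain ⟨w, hw⟩ := (hc x (Sum.inr (Sum.inl i))).exists_walk_length_eq_dist
    obtain ⟨y, hadj, p, hp⟩ :=
      SimpleGraph.Walk.exists_eq_cons_of_ne (Ne.symm hx) w.reverse
    have hy : y = Sum.inl u := by
      rcases y with b | i' | j'
      · rw [adj_inrl_inl.1 hadj]
      · exact absurd hadj adj_inr_inr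
      · exact absurd hadj adj_inr_inr
    subst hy
    have hlen : w.length = p.length + 1 := by
      have := congrArg SimpleGraph.Walk.length hp
      simpa [SimpleGraph.Walk.length_reverse] using this
    have hdp : (attach2 G u v s t).dist x (Sum.inl u) ≤ p.length := by
      rw [SimpleGraph.dist_comm]
      exact SimpleGraph.dist_le p
    omega

lemma dist_inrr (hconn : G.Connected) {x : V ⊕ (Fin s ⊕ Fin t)} (j : Fin t)
    (hx : x ≠ Sum.inr (Sum.inr j)) :
    (attach2 G u v s t).dist x (Sum.inr (Sum.inr j)) =
      (attach2 G u v s t).dist x (Sum.inl v) + 1 := by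
  have hc := attach2_connected (u := u) (v := v) (s := s) (t := t) hconn
  apply le_antisymm
  · calc (attach2 G u v s t).dist x (Sum.inr (Sum.inr j))
        ≤ (attach2 G u v s t).dist x (Sum.inl v) +
          (attach2 G u v s t).dist (Sum.inl v) (Sum.inr (Sum.inr j)) := hc.dist_triangle
      _ ≤ (attach2 G u v s t).dist x (Sum.inl v) + 1 := by
          have hadj : (attach2 G u v s t).Adj (Sum.inl v) (Sum.inr (Sum.inr j)) :=
            adj_inl_inrr.2 rfl
          have h1 := SimpleGraph.dist_le hadj.toWalk
          simp only [SimpleGraph.Adj.toWalk, SimpleGraph.Walk.length_cons,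
            SimpleGraph.Walk.length_nil] at h1
          omega
  · obtain ⟨w, hw⟩ := (hc x (Sum.inr (Sum.inr j))).exists_walk_length_eq_dist
    obtain ⟨y, hadj, p, hp⟩ :=
      SimpleGraph.Walk.exists_eq_cons_of_ne (Ne.symm hx) w.reverse
    have hy : y = Sum.inl v := by
      rcases y with b | i' | j'
      · rw [adj_inrr_inl.1 hadj]
      · exact absurd hadj adj_inr_inr
      · exact absurd hadj adj_inr_inr
    subst hy
    have hlen : w.length = p.length + 1 := by
      have := congrArg SimpleGraph.Walk.length hp
      simpa [SimpleGraph.Walk.length_reverse] using this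
    have hdp : (attach2 G u v s t).dist x (Sum.inl v) ≤ p.length := by
      rw [SimpleGraph.dist_comm]
      exact SimpleGraph.dist_le p
    omega

lemma dist_inl_p (hconn : G.Connected) (a : V) (i : Fin s) :
    (attach2 G u v s t).dist (Sum.inl a) (Sum.inr (Sum.inl i)) = G.dist a u + 1 := by
  rw [dist_inrl hconn i (by simp), dist_inl_inl hconn]

lemma dist_inl_q (hconn : G.Connected) (a : V) (j : Fin t) :
    (attach2 G u v s t).dist (Sum.inl a) (Sum.inr (Sum.inr j)) = G.dist a v + 1 := by
  rw [dist_inrr hconn j (by simp), dist_inl_inl hconn]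

lemma dist_p_p (hconn : G.Connected) {i i' : Fin s} (h : i ≠ i') :
    (attach2 G u v s t).dist (Sum.inr (Sum.inl i)) (Sum.inr (Sum.inl i')) = 2 := by
  rw [dist_inrl hconn i' (by simp [h]), SimpleGraph.dist_comm,
    dist_inl_p hconn, SimpleGraph.dist_self]

lemma dist_q_q (hconn : G.Connected) {j j' : Fin t} (h : j ≠ j') :
    (attach2 G u v s t).dist (Sum.inr (Sum.inr j)) (Sum.inr (Sum.inr j')) = 2 := by
  rw [dist_inrr hconn j' (by simp [h]), SimpleGraph.dist_comm,
    dist_inl_q hconn, SimpleGraph.dist_self]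

lemma dist_p_q (hconn : G.Connected) (i : Fin s) (j : Fin t) :
    (attach2 G u v s t).dist (Sum.inr (Sum.inl i)) (Sum.inr (Sum.inr j)) =
      G.dist u v + 2 := by
  rw [dist_inrr hconn j (by simp), SimpleGraph.dist_comm, dist_inl_p hconn,
    SimpleGraph.dist_comm]

lemma dist_q_p (hconn : G.Connected) (i : Fin s) (j : Fin t) :
    (attach2 G u v s t).dist (Sum.inr (Sum.inr j)) (Sum.inr (Sum.inl i)) =
      G.dist u v + 2 := by
  rw [SimpleGraph.dist_comm, dist_p_q hconn]

end Attach2Lemmas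
section Attach2Counts

variable {V : Type*} [Fintype V] {G : SimpleGraph V} {u v : V} {s t : ℕ}

lemma degree_attach2_inl (a : V) :
    (attach2 G u v s t).degree (Sum.inl a) =
      G.degree a + (if a = u then s else 0) + (if a = v then t else 0) := by
  classical
  rw [← SimpleGraph.card_neighborFinset_eq_degree, SimpleGraph.neighborFinset_eq_filter,
    Finset.card_filter, Fintype.sum_sum_type, Fintype.sum_sum_type]
  have h1 : ∑ b : V, (if (attach2 G u v s t).Adj (Sum.inl a) (Sum.inl b) then 1 else 0)
      = G.degree a := by
    simp only [adj_inl_inl]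
    rw [← Finset.card_filter, ← SimpleGraph.neighborFinset_eq_filter,
      SimpleGraph.card_neighborFinset_eq_degree]
  have h2 : ∑ _i : Fin s,
      (if (attach2 G u v s t).Adj (Sum.inl a) (Sum.inr (Sum.inl _i)) then 1 else 0)
      = (if a = u then s else 0) := by
    simp only [adj_inl_inrl]
    split <;> simp
  have h3 : ∑ _j : Fin t,
      (if (attach2 G u v s t).Adj (Sum.inl a) (Sum.inr (Sum.inr _j)) then 1 else 0)
      = (if a = v then t else 0) := by
    simp only [adj_inl_inrr]
    split <;> simp
  rw [h1, h2, h3]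
  omega

lemma degree_attach2_p (i : Fin s) :
    (attach2 G u v s t).degree (Sum.inr (Sum.inl i)) = 1 := by
  classical
  rw [← SimpleGraph.card_neighborFinset_eq_degree, SimpleGraph.neighborFinset_eq_filter,
    Finset.card_filter, Fintype.sum_sum_type, Fintype.sum_sum_type]
  simp [Finset.sum_ite_eq]

lemma degree_attach2_q (j : Fin t) :
    (attach2 G u v s t).degree (Sum.inr (Sum.inr j)) = 1 := by
  classical
  rw [← SimpleGraph.card_neighborFinset_eq_degree, SimpleGraph.neighborFinset_eq_filter,
    Finset.card_filter, Fintype.sum_sum_type, Fintype.sum_sum_type]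
  simp [Finset.sum_ite_eq]

lemma transmission_attach2_inl (hconn : G.Connected) (a : V) :
    transmission (attach2 G u v s t) (Sum.inl a) =
      transmission G a + s * (G.dist a u + 1) + t * (G.dist a v + 1) := by
  unfold transmission
  rw [Fintype.sum_sum_type, Fintype.sum_sum_type]
  simp only [dist_inl_inl hconn, dist_inl_p hconn, dist_inl_q hconn,
    Finset.sum_const, Finset.card_univ, Fintype.card_fin, smul_eq_mul]
  ring

lemma transmission_attach2_p (hconn : G.Connected) (i : Fin s) :
    transmission (attach2 G u v s t) (Sum.inr (Sum.inl i)) =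
      transmission G u + Fintype.card V + 2 * (s - 1) + t * (G.dist u v + 2) := by
  classical
  unfold transmission
  rw [Fintype.sum_sum_type, Fintype.sum_sum_type]
  have h1 : ∑ b : V, (attach2 G u v s t).dist (Sum.inr (Sum.inl i)) (Sum.inl b)
      = transmission G u + Fintype.card V := by
    have : ∀ b : V, (attach2 G u v s t).dist (Sum.inr (Sum.inl i)) (Sum.inl b)
        = G.dist u b + 1 := by
      intro b
      rw [SimpleGraph.dist_comm, dist_inl_p hconn, SimpleGraph.dist_comm]
    rw [Finset.sum_congr rfl fun b _ => this b, Finset.sum_add_distrib]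
    simp [transmission, Finset.card_univ]
  have h2 : ∑ i' : Fin s,
      (attach2 G u v s t).dist (Sum.inr (Sum.inl i)) (Sum.inr (Sum.inl i'))
      = 2 * (s - 1) := by
    have key : ∀ i' : Fin s, (attach2 G u v s t).dist (Sum.inr (Sum.inl i)) (Sum.inr (Sum.inl i'))
        = if i' = i then 0 else 2 := by
      intro i'
      split
      · rename_i h; subst h; simp
      · rename_i h; exact dist_p_p hconn (Ne.symm h)
    rw [Finset.sum_congr rfl fun i' _ => key i', Finset.sum_ite, Finset.sum_const,
      Finset.sum_const, Finset.filter_ne', Finset.card_erase_of_mem (Finset.mem_univ i)]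
    simp [Finset.card_univ]
    omega
  have h3 : ∑ j : Fin t,
      (attach2 G u v s t).dist (Sum.inr (Sum.inl i)) (Sum.inr (Sum.inr j))
      = t * (G.dist u v + 2) := by
    simp [dist_p_q hconn, Finset.sum_const, Finset.card_univ, mul_comm]
  rw [h1, h2, h3]
  unfold transmission
  ring

lemma transmission_attach2_q (hconn : G.Connected) (j : Fin t) :
    transmission (attach2 G u v s t) (Sum.inr (Sum.inr j)) =
      transmission G v + Fintype.card V + 2 * (t - 1) + s * (G.dist u v + 2) := by
  classical
  unfold transmission
  rw [Fintype.sum_sum_type, Fintype.sum_sum_type]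
  have h1 : ∑ b : V, (attach2 G u v s t).dist (Sum.inr (Sum.inr j)) (Sum.inl b)
      = transmission G v + Fintype.card V := by
    have : ∀ b : V, (attach2 G u v s t).dist (Sum.inr (Sum.inr j)) (Sum.inl b)
        = G.dist v b + 1 := by
      intro b
      rw [SimpleGraph.dist_comm, dist_inl_q hconn, SimpleGraph.dist_comm]
    rw [Finset.sum_congr rfl fun b _ => this b, Finset.sum_add_distrib]
    simp [transmission, Finset.card_univ]
  have h2 : ∑ j' : Fin t,
      (attach2 G u v s t).dist (Sum.inr (Sum.inr j)) (Sum.inr (Sum.inr j'))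
      = 2 * (t - 1) := by
    have key : ∀ j' : Fin t, (attach2 G u v s t).dist (Sum.inr (Sum.inr j)) (Sum.inr (Sum.inr j'))
        = if j' = j then 0 else 2 := by
      intro j'
      split
      · rename_i h; subst h; simp
      · rename_i h; exact dist_q_q hconn (Ne.symm h)
    rw [Finset.sum_congr rfl fun j' _ => key j', Finset.sum_ite, Finset.sum_const,
      Finset.sum_const, Finset.filter_ne', Finset.card_erase_of_mem (Finset.mem_univ j)]
    simp [Finset.card_univ]
    omega
  have h3 : ∑ i : Fin s,
      (attach2 G u v s t).dist (Sum.inr (Sum.inr j)) (Sum.inr (Sum.inl i))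
      = s * (G.dist u v + 2) := by
    simp [dist_q_p hconn, Finset.sum_const, Finset.card_univ, mul_comm]
  rw [h1, h3, h2]
  unfold transmission
  ring

end Attach2Counts
section Attach2DegDist

variable {V : Type*} [Fintype V] {G : SimpleGraph V}

lemma degDist_attach2 (hconn : G.Connected) {u v : V} (huv : u ≠ v) (s t : ℕ) :
    degDist (attach2 G u v s t) + 2 * s + 2 * t =
      degDist G + (s + t) * (∑ a : V, G.degree a) + (s + t) * Fintype.card V
        + 3 * (s + t) ^ 2
        + s * ((∑ a : V, G.degree a * G.dist a u) + 2 * transmission G u)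
        + t * ((∑ a : V, G.degree a * G.dist a v) + 2 * transmission G v)
        + 4 * (s * (t * G.dist u v)) := by
  classical
  have expand : ∀ a : V,
      (attach2 G u v s t).degree (Sum.inl a) *
        transmission (attach2 G u v s t) (Sum.inl a) =
      G.degree a * transmission G a + s * (G.degree a * G.dist a u)
        + t * (G.degree a * G.dist a v) + (s + t) * G.degree a
        + (if a = u then
            s * (transmission G u + s * (G.dist u u + 1) + t * (G.dist u v + 1)) else 0)
        + (if a = v then
            t * (transmission G v + s * (G.dist v u + 1) + t * (G.dist v v + 1)) else 0) := by
    intro a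
    rw [degree_attach2_inl, transmission_attach2_inl hconn]
    by_cases hau : a = u <;> by_cases hav : a = v <;> simp [hau, hav, huv, huv.symm] <;> ring
  have hS1 : ∑ a : V, (attach2 G u v s t).degree (Sum.inl a) *
        transmission (attach2 G u v s t) (Sum.inl a) =
      degDist G + s * (∑ a : V, G.degree a * G.dist a u)
        + t * (∑ a : V, G.degree a * G.dist a v) + (s + t) * (∑ a : V, G.degree a)
        + s * (transmission G u + s * 1 + t * (G.dist u v + 1))
        + t * (transmission G v + s * (G.dist u v + 1) + t * 1) := by
    rw [Finset.sum_congr rfl fun a _ => expand a]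
    simp only [Finset.sum_add_distrib, ← Finset.mul_sum, Finset.sum_ite_eq',
      Finset.mem_univ, if_true, SimpleGraph.dist_self,
      SimpleGraph.dist_comm (G := G) (u := v) (v := u)]
    simp only [degDist]
  have hS2 : ∑ i : Fin s, (attach2 G u v s t).degree (Sum.inr (Sum.inl i)) *
        transmission (attach2 G u v s t) (Sum.inr (Sum.inl i)) =
      s * (transmission G u + Fintype.card V + 2 * (s - 1) + t * (G.dist u v + 2)) := by
    simp [degree_attach2_p, transmission_attach2_p hconn, Finset.sum_const, mul_comm]
  have hS3 : ∑ j : Fin t, (attach2 G u v s t).degree (Sum.inr (Sum.inr j)) *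
        transmission (attach2 G u v s t) (Sum.inr (Sum.inr j)) =
      t * (transmission G v + Fintype.card V + 2 * (t - 1) + s * (G.dist u v + 2)) := by
    simp [degree_attach2_q, transmission_attach2_q hconn, Finset.sum_const, mul_comm]
  have hsub : ∀ k Du n D e : ℕ,
      k * (Du + n + 2 * (k - 1) + e * (D + 2)) + 2 * k
        = k * Du + k * n + 2 * k ^ 2 + k * (e * D) + 2 * (k * e) := by
    intro k Du n D e
    cases k with
    | zero => simp
    | succ m => simp only [Nat.succ_sub_one]; ring
  have hsplit : degDist (attach2 G u v s t) =
      (∑ a : V, (attach2 G u v s t).degree (Sum.inl a) *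
        transmission (attach2 G u v s t) (Sum.inl a))
      + ((∑ i : Fin s, (attach2 G u v s t).degree (Sum.inr (Sum.inl i)) *
          transmission (attach2 G u v s t) (Sum.inr (Sum.inl i)))
        + (∑ j : Fin t, (attach2 G u v s t).degree (Sum.inr (Sum.inr j)) *
          transmission (attach2 G u v s t) (Sum.inr (Sum.inr j)))) := by
    rw [degDist, Fintype.sum_sum_type, Fintype.sum_sum_type]
  rw [hsplit, hS1, hS2, hS3]
  have h2 := hsub s (transmission G u) (Fintype.card V) (G.dist u v) t
  have h3 := hsub t (transmission G v) (Fintype.card V) (G.dist u v) s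
  -- rearrange so the `hsub` identities apply, then finish by ring
  calc degDist G + s * (∑ a : V, G.degree a * G.dist a u)
        + t * (∑ a : V, G.degree a * G.dist a v) + (s + t) * (∑ a : V, G.degree a)
        + s * (transmission G u + s * 1 + t * (G.dist u v + 1))
        + t * (transmission G v + s * (G.dist u v + 1) + t * 1)
        + (s * (transmission G u + Fintype.card V + 2 * (s - 1) + t * (G.dist u v + 2))
          + t * (transmission G v + Fintype.card V + 2 * (t - 1) + s * (G.dist u v + 2)))
        + 2 * s + 2 * t
      = degDist G + s * (∑ a : V, G.degree a * G.dist a u)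
        + t * (∑ a : V, G.degree a * G.dist a v) + (s + t) * (∑ a : V, G.degree a)
        + s * (transmission G u + s * 1 + t * (G.dist u v + 1))
        + t * (transmission G v + s * (G.dist u v + 1) + t * 1)
        + ((s * (transmission G u + Fintype.card V + 2 * (s - 1) + t * (G.dist u v + 2)) + 2 * s)
          + (t * (transmission G v + Fintype.card V + 2 * (t - 1) + s * (G.dist u v + 2)) + 2 * t)) := by
        ring
    _ = _ := by
        rw [h2, h3]
        ring

end Attach2DegDist


/-- Lemma 2: if `G₀` is connected with at least three vertices, `u ≠ v`, and
`s, t ≥ 1`, then `D'(G_{s,t}) > min (D'(G_{s+t,0})) (D'(G_{0,s+t}))`. -/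
theorem stmt_18 {V : Type*} [Fintype V] (G : SimpleGraph V)
    (hcard : 3 ≤ Fintype.card V) (hconn : G.Connected)
    (u v : V) (huv : u ≠ v) (s t : ℕ) (hs : 1 ≤ s) (ht : 1 ≤ t) :
    min (degDist (attach2 G u v (s + t) 0)) (degDist (attach2 G u v 0 (s + t))) <
      degDist (attach2 G u v s t) := by
  classical
  have hst := degDist_attach2 hconn huv s t
  have hc0 := degDist_attach2 hconn huv (s + t) 0
  have h0c := degDist_attach2 hconn huv 0 (s + t)
  have hD : 1 ≤ G.dist u v := hconn.pos_dist_of_ne huv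
  have h5 : 1 * (1 * 1) ≤ s * (t * G.dist u v) :=
    Nat.mul_le_mul hs (Nat.mul_le_mul ht hD)
  have h4 : 4 ≤ 4 * (s * (t * G.dist u v)) :=
    calc 4 = 4 * (1 * (1 * 1)) := by norm_num
      _ ≤ 4 * (s * (t * G.dist u v)) := Nat.mul_le_mul_left 4 h5
  rcases le_total ((∑ a : V, G.degree a * G.dist a u) + 2 * transmission G u)
      ((∑ a : V, G.degree a * G.dist a v) + 2 * transmission G v) with h | h
  · refine lt_of_le_of_lt (min_le_left _ _) ?_
    have h1 : t * ((∑ a : V, G.degree a * G.dist a u) + 2 * transmission G u)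
        ≤ t * ((∑ a : V, G.degree a * G.dist a v) + 2 * transmission G v) :=
      Nat.mul_le_mul_left t h
    linarith [hst, hc0, h1, h4]
  · refine lt_of_le_of_lt (min_le_right _ _) ?_
    have h1 : s * ((∑ a : V, G.degree a * G.dist a v) + 2 * transmission G v)
        ≤ s * ((∑ a : V, G.degree a * G.dist a u) + 2 * transmission G u) :=
      Nat.mul_le_mul_left s h
    linarith [hst, h0c, h1, h4]
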